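/- For every LPEG G there exists a DFA D such that L(G) = L(D). -/

import Mathlib

/-- Parsing expressions over alphabet `α`, with nonterminals named by naturals. -/
inductive PExp (α : Type) : Type
  | eps : PExp α                       -- ε
  | chr : α → PExp α                   -- terminal
  | anyc : PExp α                      -- any character `.`
  | seq : PExp α → PExp α → PExp α     -- sequence e₁ e₂
  | cho : PExp α → PExp α → PExp α     -- prioritized choice e₁ / e₂
  | star : PExp α → PExp α             -- greedy repetition e*
  | npred : PExp α → PExp α            -- not-predicate !e
  | opt : PExp α → PExp α              -- option e?
  | apred : PExp α → PExp α            -- and-predicate &e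
  | plus : PExp α → PExp α             -- one-or-more e+
  | nt : ℕ → PExp α                    -- nonterminal

variable {α : Type}

/-- Big-step PEG semantics: `Consume P e w (some y)` means `e` succeeds on input `w`
consuming the prefix `y`; `Consume P e w none` means `e` fails on `w`.
`P` gives the production rules for nonterminals. -/
inductive Consume (P : ℕ → PExp α) : PExp α → List α → Option (List α) → Prop
  | eps (w : List α) : Consume P .eps w (some [])
  | chr_ok (a : α) (w : List α) : Consume P (.chr a) (a :: w) (some [a])
  | chr_fail_nil (a : α) : Consume P (.chr a) [] none
  | chr_fail {a b : α} (w : List α) : a ≠ b → Consume P (.chr a) (b :: w) none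
  | any_ok (a : α) (w : List α) : Consume P .anyc (a :: w) (some [a])
  | any_fail : Consume P .anyc [] none
  | seq_ok {e1 e2 : PExp α} {x y w' : List α} :
      Consume P e1 (x ++ w') (some x) → Consume P e2 w' (some y) →
      Consume P (.seq e1 e2) (x ++ w') (some (x ++ y))
  | seq_fail1 {e1 e2 : PExp α} {w : List α} :
      Consume P e1 w none → Consume P (.seq e1 e2) w none
  | seq_fail2 {e1 e2 : PExp α} {x w' : List α} :
      Consume P e1 (x ++ w') (some x) → Consume P e2 w' none →
      Consume P (.seq e1 e2) (x ++ w') none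
  | cho1 {e1 e2 : PExp α} {w x : List α} :
      Consume P e1 w (some x) → Consume P (.cho e1 e2) w (some x)
  | cho2 {e1 e2 : PExp α} {w : List α} {r : Option (List α)} :
      Consume P e1 w none → Consume P e2 w r → Consume P (.cho e1 e2) w r
  | not_ok {e : PExp α} {w : List α} :
      Consume P e w none → Consume P (.npred e) w (some [])
  | not_fail {e : PExp α} {w x : List α} :
      Consume P e w (some x) → Consume P (.npred e) w none
  | star_done {e : PExp α} {w : List α} :
      Consume P e w none → Consume P (.star e) w (some [])
  | star_step {e : PExp α} {x y w' : List α} :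
      Consume P e (x ++ w') (some x) → Consume P (.star e) w' (some y) →
      Consume P (.star e) (x ++ w') (some (x ++ y))
  | opt_ok {e : PExp α} {w x : List α} :
      Consume P e w (some x) → Consume P (.opt e) w (some x)
  | opt_eps {e : PExp α} {w : List α} :
      Consume P e w none → Consume P (.opt e) w (some [])
  | and_ok {e : PExp α} {w x : List α} :
      Consume P e w (some x) → Consume P (.apred e) w (some [])
  | and_fail {e : PExp α} {w : List α} :
      Consume P e w none → Consume P (.apred e) w none
  | plus_ok {e : PExp α} {x y w' : List α} :
      Consume P e (x ++ w') (some x) → Consume P (.star e) w' (some y) →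
      Consume P (.plus e) (x ++ w') (some (x ++ y))
  | plus_fail {e : PExp α} {w : List α} :
      Consume P e w none → Consume P (.plus e) w none
  | nt {A : ℕ} {w : List α} {r : Option (List α)} :
      Consume P (P A) w r → Consume P (.nt A) w r

/-- The language of an expression: the strings on which it succeeds. -/
def PLang (P : ℕ → PExp α) (e : PExp α) : Set (List α) :=
  { x | ∃ y, Consume P e x (some y) }

/-- Nonterminal-free parsing expressions `p ::= ε | a | . | p p | p / p | p* | !p`. -/
def NFree : PExp α → Prop
  | PExp.eps => True
  | PExp.chr _ => True
  | PExp.anyc => True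
  | PExp.seq e1 e2 => NFree e1 ∧ NFree e2
  | PExp.cho e1 e2 => NFree e1 ∧ NFree e2
  | PExp.star e => NFree e
  | PExp.npred e => NFree e
  | _ => False

/-- Linear parsing expressions `e ::= p | p A | p e | e/e | !e e`. -/
inductive Linear : PExp α → Prop
  | base {p : PExp α} : NFree p → Linear p
  | pnt {p : PExp α} (A : ℕ) : NFree p → Linear (PExp.seq p (PExp.nt A))
  | pseq {p e : PExp α} : NFree p → Linear e → Linear (PExp.seq p e)
  | cho {e1 e2 : PExp α} : Linear e1 → Linear e2 → Linear (PExp.cho e1 e2)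
  | notseq {e1 e2 : PExp α} : Linear e1 → Linear e2 → Linear (PExp.seq (PExp.npred e1) e2)

/-- All nonterminals occurring in the expression have index `< n`. -/
def NTBound (n : ℕ) : PExp α → Prop
  | PExp.nt A => A < n
  | PExp.seq e1 e2 => NTBound n e1 ∧ NTBound n e2
  | PExp.cho e1 e2 => NTBound n e1 ∧ NTBound n e2
  | PExp.star e => NTBound n e
  | PExp.npred e => NTBound n e
  | PExp.opt e => NTBound n e
  | PExp.apred e => NTBound n e
  | PExp.plus e => NTBound n e
  | _ => True

/-- A PEG: finitely many nonterminals `0, …, n-1`, production rules, start expression. -/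
structure PEGG (α : Type) where
  n : ℕ
  P : ℕ → PExp α
  start : PExp α

/-- A PEG is an LPEG iff its start expression and the bodies of its productions are
linear parsing expressions (and all nonterminal references stay in range). -/
def PEGG.IsLPEG (G : PEGG α) : Prop :=
  Linear G.start ∧ NTBound G.n G.start ∧
    ∀ A < G.n, Linear (G.P A) ∧ NTBound G.n (G.P A)

def PEGG.Lang (G : PEGG α) : Set (List α) := PLang G.P G.start

/-- Linear parsing expression grammars. -/
structure LPEG (α : Type) where
  toPEGG : PEGG α
  isLPEG : toPEGG.IsLPEG

def LPEG.Lang (G : LPEG α) : Set (List α) := G.toPEGG.Lang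

/-- Boolean finite automata.  Boolean functions over the states `Q` are represented as
`(Q → Bool) → Bool`. -/
structure BFA (α : Type) where
  Q : Type
  [fintypeQ : Fintype Q]
  [decEqQ : DecidableEq Q]
  δ : Q → α → (Q → Bool) → Bool
  f0 : (Q → Bool) → Bool
  F : Finset Q

attribute [instance] BFA.fintypeQ BFA.decEqQ

/-- Extended transition function of a BFA on boolean functions:
`run f ε = f`, `run f (a·w) = run (f(δ(q₁,a),…,δ(qₙ,a))) w`. -/
def BFA.run (B : BFA α) : ((B.Q → Bool) → Bool) → List α → ((B.Q → Bool) → Bool)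
  | f, [] => f
  | f, a :: w => B.run (fun v => f (fun q => B.δ q a v)) w

/-- Acceptance: evaluate the transited boolean function at the characteristic vector of `F`. -/
def BFA.Accepts (B : BFA α) (x : List α) : Prop :=
  B.run B.f0 x (fun q => decide (q ∈ B.F)) = true

/-- Regular expressions (without ∅, as in the paper). -/
inductive Regex (α : Type) : Type
  | eps : Regex α
  | chr : α → Regex α
  | cat : Regex α → Regex α → Regex α
  | alt : Regex α → Regex α → Regex α
  | star : Regex α → Regex α

/-- Standard language of a regular expression. -/
def Regex.lang : Regex α → Language α
  | .eps => 1
  | .chr a => {[a]}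
  | .cat r1 r2 => r1.lang * r2.lang
  | .alt r1 r2 => r1.lang + r2.lang
  | .star r => KStar.kstar r.lang

/-- The continuation-based translation Π of regular expressions into PEGs
(Medeiros et al.).  A bare nonterminal `A` is written as the linear expression `ε A`. -/
def pitr : Regex α → PEGG α → PEGG α
  | .eps, G => G
  | .chr a, G => ⟨G.n, G.P, PExp.seq (PExp.chr a) G.start⟩
  | .cat r1 r2, G => pitr r1 (pitr r2 G)
  | .alt r1 r2, G =>
      let G1 := pitr r1 G
      let G2 := pitr r2 ⟨G1.n, G1.P, G.start⟩
      ⟨G2.n, G2.P, PExp.cho G1.start G2.start⟩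
  | .star r, G =>
      let G1 := pitr r ⟨G.n + 1, G.P, PExp.seq PExp.eps (PExp.nt G.n)⟩
      ⟨G1.n, Function.update G1.P G.n (PExp.cho G1.start G.start),
        PExp.seq PExp.eps (PExp.nt G.n)⟩

/-! ### Auxiliary development -/

section Aux
variable {P : ℕ → PExp α}

/-- Sized version of `Consume`. -/
inductive CS (P : ℕ → PExp α) : ℕ → PExp α → List α → Option (List α) → Prop
  | eps (w : List α) : CS P 1 .eps w (some [])
  | chr_ok (a : α) (w : List α) : CS P 1 (.chr a) (a :: w) (some [a])
  | chr_fail_nil (a : α) : CS P 1 (.chr a) [] none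
  | chr_fail {a b : α} (w : List α) : a ≠ b → CS P 1 (.chr a) (b :: w) none
  | any_ok (a : α) (w : List α) : CS P 1 .anyc (a :: w) (some [a])
  | any_fail : CS P 1 .anyc [] none
  | seq_ok {n1 n2 : ℕ} {e1 e2 : PExp α} {x y w' : List α} :
      CS P n1 e1 (x ++ w') (some x) → CS P n2 e2 w' (some y) →
      CS P (n1+n2+1) (.seq e1 e2) (x ++ w') (some (x ++ y))
  | seq_fail1 {n1 : ℕ} {e1 e2 : PExp α} {w : List α} :
      CS P n1 e1 w none → CS P (n1+1) (.seq e1 e2) w none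
  | seq_fail2 {n1 n2 : ℕ} {e1 e2 : PExp α} {x w' : List α} :
      CS P n1 e1 (x ++ w') (some x) → CS P n2 e2 w' none →
      CS P (n1+n2+1) (.seq e1 e2) (x ++ w') none
  | cho1 {n1 : ℕ} {e1 e2 : PExp α} {w x : List α} :
      CS P n1 e1 w (some x) → CS P (n1+1) (.cho e1 e2) w (some x)
  | cho2 {n1 n2 : ℕ} {e1 e2 : PExp α} {w : List α} {r : Option (List α)} :
      CS P n1 e1 w none → CS P n2 e2 w r → CS P (n1+n2+1) (.cho e1 e2) w r
  | not_ok {n1 : ℕ} {e : PExp α} {w : List α} :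
      CS P n1 e w none → CS P (n1+1) (.npred e) w (some [])
  | not_fail {n1 : ℕ} {e : PExp α} {w x : List α} :
      CS P n1 e w (some x) → CS P (n1+1) (.npred e) w none
  | star_done {n1 : ℕ} {e : PExp α} {w : List α} :
      CS P n1 e w none → CS P (n1+1) (.star e) w (some [])
  | star_step {n1 n2 : ℕ} {e : PExp α} {x y w' : List α} :
      CS P n1 e (x ++ w') (some x) → CS P n2 (.star e) w' (some y) →
      CS P (n1+n2+1) (.star e) (x ++ w') (some (x ++ y))
  | opt_ok {n1 : ℕ} {e : PExp α} {w x : List α} :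
      CS P n1 e w (some x) → CS P (n1+1) (.opt e) w (some x)
  | opt_eps {n1 : ℕ} {e : PExp α} {w : List α} :
      CS P n1 e w none → CS P (n1+1) (.opt e) w (some [])
  | and_ok {n1 : ℕ} {e : PExp α} {w x : List α} :
      CS P n1 e w (some x) → CS P (n1+1) (.apred e) w (some [])
  | and_fail {n1 : ℕ} {e : PExp α} {w : List α} :
      CS P n1 e w none → CS P (n1+1) (.apred e) w none
  | plus_ok {n1 n2 : ℕ} {e : PExp α} {x y w' : List α} :
      CS P n1 e (x ++ w') (some x) → CS P n2 (.star e) w' (some y) →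
      CS P (n1+n2+1) (.plus e) (x ++ w') (some (x ++ y))
  | plus_fail {n1 : ℕ} {e : PExp α} {w : List α} :
      CS P n1 e w none → CS P (n1+1) (.plus e) w none
  | nt {n1 : ℕ} {A : ℕ} {w : List α} {r : Option (List α)} :
      CS P n1 (P A) w r → CS P (n1+1) (.nt A) w r

theorem cs_of_consume {e : PExp α} {w : List α} {r : Option (List α)}
    (h : Consume P e w r) : ∃ n, CS P n e w r := by
  induction h with
  | eps w => exact ⟨_, .eps w⟩
  | chr_ok a w => exact ⟨_, .chr_ok a w⟩
  | chr_fail_nil a => exact ⟨_, .chr_fail_nil a⟩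
  | chr_fail w h => exact ⟨_, .chr_fail w h⟩
  | any_ok a w => exact ⟨_, .any_ok a w⟩
  | any_fail => exact ⟨_, .any_fail⟩
  | seq_ok _ _ ih1 ih2 => obtain ⟨n1, h1⟩ := ih1; obtain ⟨n2, h2⟩ := ih2; exact ⟨_, .seq_ok h1 h2⟩
  | seq_fail1 _ ih1 => obtain ⟨n1, h1⟩ := ih1; exact ⟨_, .seq_fail1 h1⟩
  | seq_fail2 _ _ ih1 ih2 => obtain ⟨n1, h1⟩ := ih1; obtain ⟨n2, h2⟩ := ih2; exact ⟨_, .seq_fail2 h1 h2⟩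
  | cho1 _ ih1 => obtain ⟨n1, h1⟩ := ih1; exact ⟨_, .cho1 h1⟩
  | cho2 _ _ ih1 ih2 => obtain ⟨n1, h1⟩ := ih1; obtain ⟨n2, h2⟩ := ih2; exact ⟨_, .cho2 h1 h2⟩
  | not_ok _ ih1 => obtain ⟨n1, h1⟩ := ih1; exact ⟨_, .not_ok h1⟩
  | not_fail _ ih1 => obtain ⟨n1, h1⟩ := ih1; exact ⟨_, .not_fail h1⟩
  | star_done _ ih1 => obtain ⟨n1, h1⟩ := ih1; exact ⟨_, .star_done h1⟩
  | star_step _ _ ih1 ih2 => obtain ⟨n1, h1⟩ := ih1; obtain ⟨n2, h2⟩ := ih2; exact ⟨_, .star_step h1 h2⟩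
  | opt_ok _ ih1 => obtain ⟨n1, h1⟩ := ih1; exact ⟨_, .opt_ok h1⟩
  | opt_eps _ ih1 => obtain ⟨n1, h1⟩ := ih1; exact ⟨_, .opt_eps h1⟩
  | and_ok _ ih1 => obtain ⟨n1, h1⟩ := ih1; exact ⟨_, .and_ok h1⟩
  | and_fail _ ih1 => obtain ⟨n1, h1⟩ := ih1; exact ⟨_, .and_fail h1⟩
  | plus_ok _ _ ih1 ih2 => obtain ⟨n1, h1⟩ := ih1; obtain ⟨n2, h2⟩ := ih2; exact ⟨_, .plus_ok h1 h2⟩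
  | plus_fail _ ih1 => obtain ⟨n1, h1⟩ := ih1; exact ⟨_, .plus_fail h1⟩
  | nt _ ih1 => obtain ⟨n1, h1⟩ := ih1; exact ⟨_, .nt h1⟩

theorem consume_of_cs {n : ℕ} {e : PExp α} {w : List α} {r : Option (List α)}
    (h : CS P n e w r) : Consume P e w r := by
  induction h with
  | eps w => exact .eps w
  | chr_ok a w => exact .chr_ok a w
  | chr_fail_nil a => exact .chr_fail_nil a
  | chr_fail w h => exact .chr_fail w h
  | any_ok a w => exact .any_ok a w
  | any_fail => exact .any_fail
  | seq_ok _ _ ih1 ih2 => exact .seq_ok ih1 ih2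
  | seq_fail1 _ ih1 => exact .seq_fail1 ih1
  | seq_fail2 _ _ ih1 ih2 => exact .seq_fail2 ih1 ih2
  | cho1 _ ih1 => exact .cho1 ih1
  | cho2 _ _ ih1 ih2 => exact .cho2 ih1 ih2
  | not_ok _ ih1 => exact .not_ok ih1
  | not_fail _ ih1 => exact .not_fail ih1
  | star_done _ ih1 => exact .star_done ih1
  | star_step _ _ ih1 ih2 => exact .star_step ih1 ih2
  | opt_ok _ ih1 => exact .opt_ok ih1
  | opt_eps _ ih1 => exact .opt_eps ih1
  | and_ok _ ih1 => exact .and_ok ih1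
  | and_fail _ ih1 => exact .and_fail ih1
  | plus_ok _ _ ih1 ih2 => exact .plus_ok ih1 ih2
  | plus_fail _ ih1 => exact .plus_fail ih1
  | nt _ ih1 => exact .nt ih1

theorem consume_prefix {e : PExp α} {w : List α} {r : Option (List α)}
    (h : Consume P e w r) : ∀ u, r = some u → ∃ v, w = u ++ v := by
  induction h with
  | eps w => exact fun u hu => ⟨w, by simp_all⟩
  | chr_ok a w => rintro u hu; cases hu; exact ⟨w, rfl⟩
  | chr_fail_nil a => exact fun u hu => by simp_all
  | chr_fail w h => exact fun u hu => by simp_all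
  | any_ok a w => rintro u hu; cases hu; exact ⟨w, rfl⟩
  | any_fail => exact fun u hu => by simp_all
  | seq_ok h1 h2 ih1 ih2 =>
      rintro u hu
      cases hu
      obtain ⟨v, hv⟩ := ih2 _ rfl
      exact ⟨v, by rw [hv, List.append_assoc]⟩
  | seq_fail1 _ ih1 => exact fun u hu => by simp_all
  | seq_fail2 _ _ ih1 ih2 => exact fun u hu => by simp_all
  | cho1 _ ih1 => exact ih1
  | cho2 _ _ _ ih2 => exact ih2
  | not_ok _ ih1 => rintro u hu; cases hu; exact ⟨_, rfl⟩
  | not_fail _ ih1 => exact fun u hu => by simp_all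
  | star_done _ ih1 => rintro u hu; cases hu; exact ⟨_, rfl⟩
  | star_step h1 h2 ih1 ih2 =>
      rintro u hu
      cases hu
      obtain ⟨v, hv⟩ := ih2 _ rfl
      exact ⟨v, by rw [hv, List.append_assoc]⟩
  | opt_ok _ ih1 => exact ih1
  | opt_eps _ ih1 => rintro u hu; cases hu; exact ⟨_, rfl⟩
  | and_ok _ ih1 => rintro u hu; cases hu; exact ⟨_, rfl⟩
  | and_fail _ ih1 => exact fun u hu => by simp_all
  | plus_ok h1 h2 ih1 ih2 =>
      rintro u hu
      cases hu
      obtain ⟨v, hv⟩ := ih2 _ rfl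
      exact ⟨v, by rw [hv, List.append_assoc]⟩
  | plus_fail _ ih1 => exact fun u hu => by simp_all
  | nt _ ih1 => exact ih1

end Aux
section Aux2
variable {P : ℕ → PExp α}

private theorem consume_det_aux {e : PExp α} {w : List α} {r : Option (List α)}
    (h : Consume P e w r) : ∀ w₂ r', w = w₂ → Consume P e w₂ r' → r = r' := by
  induction h with
  | eps w => rintro w₂ r' rfl h'; cases h'; rfl
  | chr_ok a w =>
      rintro w₂ r' rfl h'
      cases h' with
      | chr_ok => rfl
      | chr_fail _ hne => exact absurd rfl hne
  | chr_fail_nil a => rintro w₂ r' rfl h'; cases h'; rfl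
  | chr_fail w hne =>
      rintro w₂ r' rfl h'
      cases h' with
      | chr_ok => exact absurd rfl hne
      | chr_fail => rfl
  | any_ok a w => rintro w₂ r' rfl h'; cases h'; rfl
  | any_fail => rintro w₂ r' rfl h'; cases h'; rfl
  | seq_ok h1 h2 ih1 ih2 =>
      rintro w₂ r' heq h'
      cases h' with
      | seq_ok h1' h2' =>
          obtain ⟨rfl⟩ : _ = _ := Option.some.inj (ih1 _ _ heq h1')
          cases List.append_cancel_left heq
          cases Option.some.inj (ih2 _ _ rfl h2')
          rfl
      | seq_fail1 h1' => exact absurd (ih1 _ _ heq h1') (by simp)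
      | seq_fail2 h1' h2' =>
          obtain ⟨rfl⟩ : _ = _ := Option.some.inj (ih1 _ _ heq h1')
          cases List.append_cancel_left heq
          exact absurd (ih2 _ _ rfl h2') (by simp)
  | seq_fail1 h1 ih1 =>
      rintro w₂ r' heq h'
      cases h' with
      | seq_ok h1' h2' => exact absurd (ih1 _ _ heq h1') (by simp)
      | seq_fail1 h1' => rfl
      | seq_fail2 h1' h2' => exact absurd (ih1 _ _ heq h1') (by simp)
  | seq_fail2 h1 h2 ih1 ih2 =>
      rintro w₂ r' heq h'
      cases h' with
      | seq_ok h1' h2' =>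
          obtain ⟨rfl⟩ : _ = _ := Option.some.inj (ih1 _ _ heq h1')
          cases List.append_cancel_left heq
          exact absurd (ih2 _ _ rfl h2') (by simp)
      | seq_fail1 h1' => exact absurd (ih1 _ _ heq h1') (by simp)
      | seq_fail2 h1' h2' => rfl
  | cho1 h1 ih1 =>
      rintro w₂ r' rfl h'
      cases h' with
      | cho1 h1' => exact ih1 _ _ rfl h1'
      | cho2 h1' h2' => exact absurd (ih1 _ _ rfl h1') (by simp)
  | cho2 h1 h2 ih1 ih2 =>
      rintro w₂ r' rfl h'
      cases h' with
      | cho1 h1' => exact absurd (ih1 _ _ rfl h1') (by simp)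
      | cho2 h1' h2' => exact ih2 _ _ rfl h2'
  | not_ok h1 ih1 =>
      rintro w₂ r' rfl h'
      cases h' with
      | not_ok h1' => rfl
      | not_fail h1' => exact absurd (ih1 _ _ rfl h1') (by simp)
  | not_fail h1 ih1 =>
      rintro w₂ r' rfl h'
      cases h' with
      | not_ok h1' => exact absurd (ih1 _ _ rfl h1') (by simp)
      | not_fail h1' => rfl
  | star_done h1 ih1 =>
      rintro w₂ r' heq h'
      cases h' with
      | star_done h1' => rfl
      | star_step h1' h2' => exact absurd (ih1 _ _ heq h1') (by simp)
  | star_step h1 h2 ih1 ih2 =>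
      rintro w₂ r' heq h'
      cases h' with
      | star_done h1' => exact absurd (ih1 _ _ heq h1') (by simp)
      | star_step h1' h2' =>
          obtain ⟨rfl⟩ : _ = _ := Option.some.inj (ih1 _ _ heq h1')
          cases List.append_cancel_left heq
          cases Option.some.inj (ih2 _ _ rfl h2')
          rfl
  | opt_ok h1 ih1 =>
      rintro w₂ r' rfl h'
      cases h' with
      | opt_ok h1' => exact ih1 _ _ rfl h1'
      | opt_eps h1' => exact absurd (ih1 _ _ rfl h1') (by simp)
  | opt_eps h1 ih1 =>
      rintro w₂ r' rfl h'
      cases h' with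
      | opt_ok h1' => exact absurd (ih1 _ _ rfl h1') (by simp)
      | opt_eps h1' => rfl
  | and_ok h1 ih1 =>
      rintro w₂ r' rfl h'
      cases h' with
      | and_ok h1' => rfl
      | and_fail h1' => exact absurd (ih1 _ _ rfl h1') (by simp)
  | and_fail h1 ih1 =>
      rintro w₂ r' rfl h'
      cases h' with
      | and_ok h1' => exact absurd (ih1 _ _ rfl h1') (by simp)
      | and_fail h1' => rfl
  | plus_ok h1 h2 ih1 ih2 =>
      rintro w₂ r' heq h'
      cases h' with
      | plus_ok h1' h2' =>
          obtain ⟨rfl⟩ : _ = _ := Option.some.inj (ih1 _ _ heq h1')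
          cases List.append_cancel_left heq
          cases Option.some.inj (ih2 _ _ rfl h2')
          rfl
      | plus_fail h1' => exact absurd (ih1 _ _ heq h1') (by simp)
  | plus_fail h1 ih1 =>
      rintro w₂ r' heq h'
      cases h' with
      | plus_ok h1' h2' => exact absurd (ih1 _ _ heq h1') (by simp)
      | plus_fail h1' => rfl
  | nt h1 ih1 =>
      rintro w₂ r' rfl h'
      cases h' with
      | nt h1' => exact ih1 _ _ rfl h1'

theorem consume_det {e : PExp α} {w : List α} {r r' : Option (List α)}
    (h : Consume P e w r) (h' : Consume P e w r') : r = r' :=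
  consume_det_aux h _ _ rfl h'

end Aux2
section Aux3
variable {P : ℕ → PExp α}

theorem cs_star_some : ∀ j (p : PExp α) (w u : List α), CS P j (.star p) w (some u) →
    (∃ j1 < j, CS P j1 p w none ∧ u = []) ∨
    ∃ x y v j1 j2, x ≠ [] ∧ w = x ++ v ∧ u = x ++ y ∧
      CS P j1 p w (some x) ∧ CS P j2 (.star p) v (some y) ∧ j1 + j2 < j := by
  intro j
  induction j using Nat.strong_induction_on with
  | _ j IH =>
    intro p w u h
    cases h with
    | star_done h1 => exact Or.inl ⟨_, Nat.lt_succ_self _, h1, rfl⟩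
    | star_step h1 h2 =>
      rename_i n1 n2 x y w2
      by_cases hx : x = []
      · subst hx
        simp only [List.nil_append] at *
        rcases IH n2 (by omega) p w2 y h2 with ⟨j1, _, hfail, _⟩ | ⟨x', y', v, j1, j2, hx', hw, hu, hcs1, _, _⟩
        · exact absurd (consume_det (consume_of_cs h1) (consume_of_cs hfail)) (by simp)
        · have := consume_det (consume_of_cs h1) (consume_of_cs hcs1)
          simp only [Option.some.injEq] at this
          exact absurd this.symm hx'
      · exact Or.inr ⟨x, y, w2, n1, n2, hx, rfl, rfl, h1, h2, by omega⟩

end Aux3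
section Aux4

/-- Consumption modes: any amount, positive amount, empty. -/
inductive PMode : Type | many | mpos | meps

/-- Mode predicate on the consumed prefix. -/
def mOK : PMode → List α → Prop
  | .many, _ => True
  | .mpos, u => u ≠ []
  | .meps, u => u = []

/-- Parsing tasks: trivial task, failure task, success-with-continuation task. -/
inductive PTask (α : Type) : Type
  | tt : PTask α
  | fl (e : PExp α) : PTask α
  | cn (m : PMode) (e : PExp α) (k : PTask α) : PTask α

/-- Fueled semantics of tasks. -/
def TSn (P : ℕ → PExp α) : PTask α → ℕ → List α → Prop
  | .tt, _, _ => True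
  | .fl e, n, w => ∃ j, j ≤ n ∧ CS P j e w none
  | .cn m e k, n, w =>
      ∃ u v j l, w = u ++ v ∧ j + l ≤ n ∧ CS P j e w (some u) ∧ mOK m u ∧ TSn P k l v

/-- Semantics of tasks. -/
def TS (P : ℕ → PExp α) (t : PTask α) (w : List α) : Prop := ∃ n, TSn P t n w

theorem TSn_mono {P : ℕ → PExp α} {t : PTask α} {n n' : ℕ} {w : List α}
    (h : TSn P t n w) (hn : n ≤ n') : TSn P t n' w := by
  induction t generalizing n n' w with
  | tt => trivial
  | fl e => obtain ⟨j, hj, hc⟩ := h; exact ⟨j, le_trans hj hn, hc⟩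
  | cn m e k ih =>
      obtain ⟨u, v, j, l, hw, hjl, hc, hm, hk⟩ := h
      exact ⟨u, v, j, l, hw, le_trans hjl hn, hc, hm, hk⟩

/-- The three head tasks of an expression. -/
def heads (e : PExp α) (k : PTask α) : List (PTask α) :=
  [.cn .many e k, .cn .mpos e k, .cn .meps e k]

mutual
/-- Closure of tasks generated by an expression with a continuation. -/
def tasksOf : PExp α → PTask α → List (PTask α)
  | .eps, k => heads .eps k
  | .chr a, k => heads (.chr a) k
  | .anyc, k => heads .anyc k
  | .seq p q, k => heads (.seq p q) k ++ tasksOf q k ++ tasksOf p (.cn .many q k)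
      ++ tasksOf p (.cn .mpos q k) ++ tasksOf p (.cn .meps q k)
  | .cho p q, k => heads (.cho p q) k ++ tasksOf p k ++ tasksOf q k ++ failTasks p
  | .star p, k => heads (.star p) k ++ failTasks p ++ tasksOf p (.cn .many (.star p) k)
  | .npred q, k => heads (.npred q) k ++ failTasks q
  | .opt q, k => heads (.opt q) k
  | .apred q, k => heads (.apred q) k
  | .plus q, k => heads (.plus q) k
  | .nt A, k => heads (.nt A) k

/-- Closure of failure tasks generated by an expression. -/
def failTasks : PExp α → List (PTask α)
  | .seq p q => .fl (.seq p q) :: (failTasks p ++ failTasks q ++ tasksOf p (.fl q))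
  | .cho p q => .fl (.cho p q) :: (failTasks p ++ failTasks q)
  | .npred q => .fl (.npred q) :: tasksOf q .tt
  | e => [.fl e]
end

/-- One-step successors of a task (for the closure property). -/
def pstep (P : ℕ → PExp α) : PTask α → List (PTask α)
  | .tt => []
  | .fl e => match e with
    | .seq p q => [.fl p, .cn .many p (.fl q)]
    | .cho p q => [.fl p, .fl q]
    | .npred q => [.cn .many q .tt]
    | .apred q => [.fl q]
    | .plus q => [.fl q]
    | .nt A => [.fl (P A)]
    | _ => []
  | .cn m e k => match e with
    | .eps => [k]
    | .chr _ => [k]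
    | .anyc => [k]
    | .seq p q =>
        [.cn .many p (.cn .many q k), .cn .many p (.cn .mpos q k), .cn .many p (.cn .meps q k),
         .cn .mpos p (.cn .many q k), .cn .mpos p (.cn .mpos q k), .cn .mpos p (.cn .meps q k),
         .cn .meps p (.cn .many q k), .cn .meps p (.cn .mpos q k), .cn .meps p (.cn .meps q k)]
    | .cho p q => [.cn m p k, .cn m q k, .fl p]
    | .star p => [.fl p, k, .cn .mpos p (.cn .many (.star p) k)]
    | .npred q => [.fl q, k]
    | .opt q => [.cn m q k, .fl q, k]
    | .apred q => [.cn .many q .tt, k]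
    | .plus q => [.cn .mpos q (.cn .many (.star q) k)]
    | .nt A => [.cn m (P A) k]

/-- The task closure of a grammar. -/
def CLo (G : PEGG α) : List (PTask α) :=
  .tt :: (tasksOf G.start .tt ++ failTasks G.start ++
    (List.range G.n).flatMap fun A => tasksOf (G.P A) .tt ++ failTasks (G.P A))

end Aux4
section Aux5
variable {P : ℕ → PExp α}

theorem head_mem_tasksOf (m : PMode) (e : PExp α) (k : PTask α) :
    PTask.cn m e k ∈ tasksOf e k := by
  cases e <;> cases m <;> simp [tasksOf, heads]

theorem fl_mem_failTasks (e : PExp α) : PTask.fl e ∈ failTasks e := by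
  cases e <;> simp [failTasks]

theorem sub_seq_q (p q : PExp α) (k : PTask α) : tasksOf q k ⊆ tasksOf (.seq p q) k := by
  intro x hx; simp [tasksOf, heads]; tauto

theorem sub_seq_p (p q : PExp α) (k : PTask α) (m2 : PMode) :
    tasksOf p (.cn m2 q k) ⊆ tasksOf (.seq p q) k := by
  intro x hx; cases m2 <;> (simp [tasksOf, heads]; tauto)

theorem sub_cho_p (p q : PExp α) (k : PTask α) : tasksOf p k ⊆ tasksOf (.cho p q) k := by
  intro x hx; simp [tasksOf, heads]; tauto

theorem sub_cho_q (p q : PExp α) (k : PTask α) : tasksOf q k ⊆ tasksOf (.cho p q) k := by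
  intro x hx; simp [tasksOf, heads]; tauto

theorem sub_cho_f (p q : PExp α) (k : PTask α) : failTasks p ⊆ tasksOf (.cho p q) k := by
  intro x hx; simp [tasksOf, heads]; tauto

theorem sub_star_f (p : PExp α) (k : PTask α) : failTasks p ⊆ tasksOf (.star p) k := by
  intro x hx; simp [tasksOf, heads]; tauto

theorem sub_star_p (p : PExp α) (k : PTask α) :
    tasksOf p (.cn .many (.star p) k) ⊆ tasksOf (.star p) k := by
  intro x hx; simp [tasksOf, heads]; tauto

theorem sub_npred_f (q : PExp α) (k : PTask α) : failTasks q ⊆ tasksOf (.npred q) k := by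
  intro x hx; simp [tasksOf, heads]; tauto

theorem fsub_seq_p (p q : PExp α) : failTasks p ⊆ failTasks (.seq p q) := by
  intro x hx; simp [failTasks]; tauto

theorem fsub_seq_q (p q : PExp α) : failTasks q ⊆ failTasks (.seq p q) := by
  intro x hx; simp [failTasks]; tauto

theorem fsub_seq_t (p q : PExp α) : tasksOf p (.fl q) ⊆ failTasks (.seq p q) := by
  intro x hx; simp [failTasks]; tauto

theorem fsub_cho_p (p q : PExp α) : failTasks p ⊆ failTasks (.cho p q) := by
  intro x hx; simp [failTasks]; tauto

theorem fsub_cho_q (p q : PExp α) : failTasks q ⊆ failTasks (.cho p q) := by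
  intro x hx; simp [failTasks]; tauto

theorem fsub_npred (q : PExp α) : tasksOf q .tt ⊆ failTasks (.npred q) := by
  intro x hx; simp [failTasks]; tauto

end Aux5
section
theorem mem_heads {t : PTask α} {e : PExp α} {k : PTask α} :
    t ∈ heads e k ↔ (t = .cn .many e k ∨ t = .cn .mpos e k ∨ t = .cn .meps e k) := by
  simp [heads]
end
section Aux6
variable {P : ℕ → PExp α}

theorem nfree_closed (L : List (PTask α)) (htt : PTask.tt ∈ L) :
    ∀ (p : PExp α), NFree p →
      (∀ k, k ∈ L → (∀ x ∈ tasksOf p k, x ∈ L) →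
        ∀ t ∈ tasksOf p k, ∀ t' ∈ pstep P t, t' ∈ L) ∧
      ((∀ x ∈ failTasks p, x ∈ L) → ∀ t ∈ failTasks p, ∀ t' ∈ pstep P t, t' ∈ L) := by
  intro p
  induction p with
  | eps =>
      intro _
      refine ⟨fun k hk hsub t ht t' ht' => ?_, fun hsub t ht t' ht' => ?_⟩
      · simp [tasksOf, heads] at ht
        rcases ht with rfl|rfl|rfl <;> (simp [pstep] at ht'; subst ht'; exact hk)
      · simp [failTasks] at ht; subst ht; simp [pstep] at ht'
  | chr a =>
      intro _
      refine ⟨fun k hk hsub t ht t' ht' => ?_, fun hsub t ht t' ht' => ?_⟩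
      · simp [tasksOf, heads] at ht
        rcases ht with rfl|rfl|rfl <;> (simp [pstep] at ht'; subst ht'; exact hk)
      · simp [failTasks] at ht; subst ht; simp [pstep] at ht'
  | anyc =>
      intro _
      refine ⟨fun k hk hsub t ht t' ht' => ?_, fun hsub t ht t' ht' => ?_⟩
      · simp [tasksOf, heads] at ht
        rcases ht with rfl|rfl|rfl <;> (simp [pstep] at ht'; subst ht'; exact hk)
      · simp [failTasks] at ht; subst ht; simp [pstep] at ht'
  | seq p q ihp ihq =>
      intro hnf
      obtain ⟨hnp, hnq⟩ : NFree p ∧ NFree q := hnf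
      constructor
      · intro k hk hsub t ht t' ht'
        have hq : ∀ x ∈ tasksOf q k, x ∈ L := fun x hx => hsub x (sub_seq_q p q k hx)
        have hkm : ∀ m2 : PMode, (PTask.cn m2 q k) ∈ L :=
          fun m2 => hq _ (head_mem_tasksOf m2 q k)
        have hp : ∀ m2 : PMode, ∀ x ∈ tasksOf p (.cn m2 q k), x ∈ L :=
          fun m2 x hx => hsub x (sub_seq_p p q k m2 hx)
        simp only [tasksOf, heads, List.mem_append, List.mem_cons, List.mem_singleton,
          List.not_mem_nil, or_false] at ht
        rcases ht with ((((rfl|rfl|rfl)|ht)|ht)|ht)|ht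
        · simp [pstep] at ht'
          rcases ht' with rfl|rfl|rfl|rfl|rfl|rfl|rfl|rfl|rfl <;>
            exact hsub _ (sub_seq_p p q k _ (head_mem_tasksOf _ p _))
        · simp [pstep] at ht'
          rcases ht' with rfl|rfl|rfl|rfl|rfl|rfl|rfl|rfl|rfl <;>
            exact hsub _ (sub_seq_p p q k _ (head_mem_tasksOf _ p _))
        · simp [pstep] at ht'
          rcases ht' with rfl|rfl|rfl|rfl|rfl|rfl|rfl|rfl|rfl <;>
            exact hsub _ (sub_seq_p p q k _ (head_mem_tasksOf _ p _))
        · exact (ihq hnq).1 k hk hq t ht t' ht'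
        · exact (ihp hnp).1 _ (hkm .many) (hp .many) t ht t' ht'
        · exact (ihp hnp).1 _ (hkm .mpos) (hp .mpos) t ht t' ht'
        · exact (ihp hnp).1 _ (hkm .meps) (hp .meps) t ht t' ht'
      · intro hsub t ht t' ht'
        have hfp : ∀ x ∈ failTasks p, x ∈ L := fun x hx => hsub x (fsub_seq_p p q hx)
        have hfq : ∀ x ∈ failTasks q, x ∈ L := fun x hx => hsub x (fsub_seq_q p q hx)
        have htp : ∀ x ∈ tasksOf p (.fl q), x ∈ L := fun x hx => hsub x (fsub_seq_t p q hx)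
        simp only [failTasks, List.mem_cons, List.mem_append] at ht
        rcases ht with rfl|((ht|ht)|ht)
        · simp [pstep] at ht'
          rcases ht' with rfl|rfl
          · exact hfp _ (fl_mem_failTasks p)
          · exact htp _ (head_mem_tasksOf _ p _)
        · exact (ihp hnp).2 hfp t ht t' ht'
        · exact (ihq hnq).2 hfq t ht t' ht'
        · exact (ihp hnp).1 _ (hfq _ (fl_mem_failTasks q)) htp t ht t' ht'
  | cho p q ihp ihq =>
      intro hnf
      obtain ⟨hnp, hnq⟩ : NFree p ∧ NFree q := hnf
      constructor
      · intro k hk hsub t ht t' ht'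
        have hp : ∀ x ∈ tasksOf p k, x ∈ L := fun x hx => hsub x (sub_cho_p p q k hx)
        have hq : ∀ x ∈ tasksOf q k, x ∈ L := fun x hx => hsub x (sub_cho_q p q k hx)
        have hf : ∀ x ∈ failTasks p, x ∈ L := fun x hx => hsub x (sub_cho_f p q k hx)
        simp only [tasksOf, heads, List.mem_append, List.mem_cons, List.mem_singleton,
          List.not_mem_nil, or_false] at ht
        rcases ht with (((rfl|rfl|rfl)|ht)|ht)|ht
        · simp [pstep] at ht'
          rcases ht' with rfl|rfl|rfl
          · exact hp _ (head_mem_tasksOf _ p k)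
          · exact hq _ (head_mem_tasksOf _ q k)
          · exact hf _ (fl_mem_failTasks p)
        · simp [pstep] at ht'
          rcases ht' with rfl|rfl|rfl
          · exact hp _ (head_mem_tasksOf _ p k)
          · exact hq _ (head_mem_tasksOf _ q k)
          · exact hf _ (fl_mem_failTasks p)
        · simp [pstep] at ht'
          rcases ht' with rfl|rfl|rfl
          · exact hp _ (head_mem_tasksOf _ p k)
          · exact hq _ (head_mem_tasksOf _ q k)
          · exact hf _ (fl_mem_failTasks p)
        · exact (ihp hnp).1 k hk hp t ht t' ht'
        · exact (ihq hnq).1 k hk hq t ht t' ht'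
        · exact (ihp hnp).2 hf t ht t' ht'
      · intro hsub t ht t' ht'
        have hfp : ∀ x ∈ failTasks p, x ∈ L := fun x hx => hsub x (fsub_cho_p p q hx)
        have hfq : ∀ x ∈ failTasks q, x ∈ L := fun x hx => hsub x (fsub_cho_q p q hx)
        simp only [failTasks, List.mem_cons, List.mem_append] at ht
        rcases ht with rfl|ht|ht
        · simp [pstep] at ht'
          rcases ht' with rfl|rfl
          · exact hfp _ (fl_mem_failTasks p)
          · exact hfq _ (fl_mem_failTasks q)
        · exact (ihp hnp).2 hfp t ht t' ht'
        · exact (ihq hnq).2 hfq t ht t' ht'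
  | star p ihp =>
      intro hnf
      have hnp : NFree p := hnf
      constructor
      · intro k hk hsub t ht t' ht'
        have hf : ∀ x ∈ failTasks p, x ∈ L := fun x hx => hsub x (sub_star_f p k hx)
        have hp : ∀ x ∈ tasksOf p (.cn .many (.star p) k), x ∈ L :=
          fun x hx => hsub x (sub_star_p p k hx)
        have hks : PTask.cn .many (.star p) k ∈ L := hsub _ (head_mem_tasksOf .many (.star p) k)
        simp only [tasksOf, heads, List.mem_append, List.mem_cons, List.mem_singleton,
          List.not_mem_nil, or_false] at ht
        rcases ht with ((rfl|rfl|rfl)|ht)|ht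
        · simp [pstep] at ht'
          rcases ht' with rfl|rfl|rfl
          · exact hf _ (fl_mem_failTasks p)
          · exact hk
          · exact hp _ (head_mem_tasksOf _ p _)
        · simp [pstep] at ht'
          rcases ht' with rfl|rfl|rfl
          · exact hf _ (fl_mem_failTasks p)
          · exact hk
          · exact hp _ (head_mem_tasksOf _ p _)
        · simp [pstep] at ht'
          rcases ht' with rfl|rfl|rfl
          · exact hf _ (fl_mem_failTasks p)
          · exact hk
          · exact hp _ (head_mem_tasksOf _ p _)
        · exact (ihp hnp).2 hf t ht t' ht'
        · exact (ihp hnp).1 _ hks hp t ht t' ht'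
      · intro hsub t ht t' ht'
        simp only [failTasks, List.mem_singleton] at ht
        subst ht; simp [pstep] at ht'
  | npred q ihq =>
      intro hnf
      have hnq : NFree q := hnf
      constructor
      · intro k hk hsub t ht t' ht'
        have hf : ∀ x ∈ failTasks q, x ∈ L := fun x hx => hsub x (sub_npred_f q k hx)
        simp only [tasksOf, heads, List.mem_append, List.mem_cons, List.mem_singleton,
          List.not_mem_nil, or_false] at ht
        rcases ht with (rfl|rfl|rfl)|ht
        · simp [pstep] at ht'
          rcases ht' with rfl|rfl
          · exact hf _ (fl_mem_failTasks q)
          · exact hk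
        · simp [pstep] at ht'
          rcases ht' with rfl|rfl
          · exact hf _ (fl_mem_failTasks q)
          · exact hk
        · simp [pstep] at ht'
          rcases ht' with rfl|rfl
          · exact hf _ (fl_mem_failTasks q)
          · exact hk
        · exact (ihq hnq).2 hf t ht t' ht'
      · intro hsub t ht t' ht'
        have htq : ∀ x ∈ tasksOf q .tt, x ∈ L := fun x hx => hsub x (fsub_npred q hx)
        simp only [failTasks, List.mem_cons] at ht
        rcases ht with rfl|ht
        · simp [pstep] at ht'
          subst ht'
          exact htq _ (head_mem_tasksOf _ q _)
        · exact (ihq hnq).1 _ htt htq t ht t' ht'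
  | opt q ihq => intro hnf; exact absurd hnf (by simp [NFree])
  | apred q ihq => intro hnf; exact absurd hnf (by simp [NFree])
  | plus q ihq => intro hnf; exact absurd hnf (by simp [NFree])
  | nt A => intro hnf; exact absurd hnf (by simp [NFree])

end Aux6
section Aux7
variable {P : ℕ → PExp α}

theorem linear_closed (L : List (PTask α)) (htt : PTask.tt ∈ L) (n : ℕ)
    (hP : ∀ A < n, (∀ m : PMode, PTask.cn m (P A) PTask.tt ∈ L) ∧ PTask.fl (P A) ∈ L) :
    ∀ (e : PExp α), Linear e → NTBound n e →
      ((∀ x ∈ tasksOf e .tt, x ∈ L) → ∀ t ∈ tasksOf e .tt, ∀ t' ∈ pstep P t, t' ∈ L) ∧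
      ((∀ x ∈ failTasks e, x ∈ L) → ∀ t ∈ failTasks e, ∀ t' ∈ pstep P t, t' ∈ L) := by
  intro e he
  induction he with
  | base hp =>
      intro hb
      exact ⟨fun hsub => (nfree_closed L htt _ hp).1 .tt htt hsub,
        (nfree_closed L htt _ hp).2⟩
  | pnt A hp =>
      rename_i p
      intro hb
      obtain ⟨hbp, hA⟩ : NTBound n p ∧ A < n := hb
      constructor
      · intro hsub t ht t' ht'
        have hnt : ∀ x ∈ tasksOf (PExp.nt A) .tt, x ∈ L :=
          fun x hx => hsub x (sub_seq_q p _ _ hx)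
        have hkm : ∀ m2 : PMode, (PTask.cn m2 (PExp.nt A) .tt) ∈ L :=
          fun m2 => hnt _ (head_mem_tasksOf m2 _ _)
        have hpm : ∀ m2 : PMode, ∀ x ∈ tasksOf p (.cn m2 (PExp.nt A) .tt), x ∈ L :=
          fun m2 x hx => hsub x (sub_seq_p p _ _ m2 hx)
        simp only [tasksOf, heads, List.mem_append, List.mem_cons, List.mem_singleton,
          List.not_mem_nil, or_false] at ht
        rcases ht with ((((rfl|rfl|rfl)|ht)|ht)|ht)|ht
        · simp [pstep] at ht'
          rcases ht' with rfl|rfl|rfl|rfl|rfl|rfl|rfl|rfl|rfl <;>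
            exact hsub _ (sub_seq_p p _ _ _ (head_mem_tasksOf _ p _))
        · simp [pstep] at ht'
          rcases ht' with rfl|rfl|rfl|rfl|rfl|rfl|rfl|rfl|rfl <;>
            exact hsub _ (sub_seq_p p _ _ _ (head_mem_tasksOf _ p _))
        · simp [pstep] at ht'
          rcases ht' with rfl|rfl|rfl|rfl|rfl|rfl|rfl|rfl|rfl <;>
            exact hsub _ (sub_seq_p p _ _ _ (head_mem_tasksOf _ p _))
        · -- t ∈ tasksOf (nt A) .tt : heads only
          rcases ht with rfl|rfl|rfl <;>
            (simp [pstep] at ht'; subst ht'; exact (hP A hA).1 _)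
        · exact (nfree_closed L htt p hp).1 _ (hkm .many) (hpm .many) t ht t' ht'
        · exact (nfree_closed L htt p hp).1 _ (hkm .mpos) (hpm .mpos) t ht t' ht'
        · exact (nfree_closed L htt p hp).1 _ (hkm .meps) (hpm .meps) t ht t' ht'
      · intro hsub t ht t' ht'
        have hfp : ∀ x ∈ failTasks p, x ∈ L := fun x hx => hsub x (fsub_seq_p p _ hx)
        have hfq : ∀ x ∈ failTasks (PExp.nt A), x ∈ L := fun x hx => hsub x (fsub_seq_q p _ hx)
        have htp : ∀ x ∈ tasksOf p (.fl (PExp.nt A)), x ∈ L := fun x hx => hsub x (fsub_seq_t p _ hx)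
        simp only [failTasks, List.mem_cons, List.mem_append] at ht
        rcases ht with rfl|((ht|ht)|ht)
        · simp [pstep] at ht'
          rcases ht' with rfl|rfl
          · exact hfp _ (fl_mem_failTasks p)
          · exact htp _ (head_mem_tasksOf _ p _)
        · exact (nfree_closed L htt p hp).2 hfp t ht t' ht'
        · -- t ∈ failTasks (nt A) = [.fl (nt A)]
          rcases ht with rfl|ht
          · simp [pstep] at ht'
            subst ht'
            exact (hP A hA).2
          · exact absurd ht (by simp)
        · exact (nfree_closed L htt p hp).1 _ (hfq _ (fl_mem_failTasks _)) htp t ht t' ht'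
  | pseq hp hl ih =>
      rename_i p e'
      intro hb
      obtain ⟨hbp, hbe⟩ : NTBound n p ∧ NTBound n e' := hb
      constructor
      · intro hsub t ht t' ht'
        have hq : ∀ x ∈ tasksOf e' .tt, x ∈ L := fun x hx => hsub x (sub_seq_q p _ _ hx)
        have hkm : ∀ m2 : PMode, (PTask.cn m2 e' .tt) ∈ L :=
          fun m2 => hq _ (head_mem_tasksOf m2 _ _)
        have hpm : ∀ m2 : PMode, ∀ x ∈ tasksOf p (.cn m2 e' .tt), x ∈ L :=
          fun m2 x hx => hsub x (sub_seq_p p _ _ m2 hx)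
        simp only [tasksOf, heads, List.mem_append, List.mem_cons, List.mem_singleton,
          List.not_mem_nil, or_false] at ht
        rcases ht with ((((rfl|rfl|rfl)|ht)|ht)|ht)|ht
        · simp [pstep] at ht'
          rcases ht' with rfl|rfl|rfl|rfl|rfl|rfl|rfl|rfl|rfl <;>
            exact hsub _ (sub_seq_p p _ _ _ (head_mem_tasksOf _ p _))
        · simp [pstep] at ht'
          rcases ht' with rfl|rfl|rfl|rfl|rfl|rfl|rfl|rfl|rfl <;>
            exact hsub _ (sub_seq_p p _ _ _ (head_mem_tasksOf _ p _))
        · simp [pstep] at ht'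
          rcases ht' with rfl|rfl|rfl|rfl|rfl|rfl|rfl|rfl|rfl <;>
            exact hsub _ (sub_seq_p p _ _ _ (head_mem_tasksOf _ p _))
        · exact (ih hbe).1 hq t ht t' ht'
        · exact (nfree_closed L htt p hp).1 _ (hkm .many) (hpm .many) t ht t' ht'
        · exact (nfree_closed L htt p hp).1 _ (hkm .mpos) (hpm .mpos) t ht t' ht'
        · exact (nfree_closed L htt p hp).1 _ (hkm .meps) (hpm .meps) t ht t' ht'
      · intro hsub t ht t' ht'
        have hfp : ∀ x ∈ failTasks p, x ∈ L := fun x hx => hsub x (fsub_seq_p p _ hx)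
        have hfq : ∀ x ∈ failTasks e', x ∈ L := fun x hx => hsub x (fsub_seq_q p _ hx)
        have htp : ∀ x ∈ tasksOf p (.fl e'), x ∈ L := fun x hx => hsub x (fsub_seq_t p _ hx)
        simp only [failTasks, List.mem_cons, List.mem_append] at ht
        rcases ht with rfl|((ht|ht)|ht)
        · simp [pstep] at ht'
          rcases ht' with rfl|rfl
          · exact hfp _ (fl_mem_failTasks p)
          · exact htp _ (head_mem_tasksOf _ p _)
        · exact (nfree_closed L htt p hp).2 hfp t ht t' ht'
        · exact (ih hbe).2 hfq t ht t' ht'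
        · exact (nfree_closed L htt p hp).1 _ (hfq _ (fl_mem_failTasks _)) htp t ht t' ht'
  | cho hl1 hl2 ih1 ih2 =>
      rename_i e1 e2
      intro hb
      obtain ⟨hb1, hb2⟩ : NTBound n e1 ∧ NTBound n e2 := hb
      constructor
      · intro hsub t ht t' ht'
        have hp : ∀ x ∈ tasksOf e1 .tt, x ∈ L := fun x hx => hsub x (sub_cho_p _ _ _ hx)
        have hq : ∀ x ∈ tasksOf e2 .tt, x ∈ L := fun x hx => hsub x (sub_cho_q _ _ _ hx)
        have hf : ∀ x ∈ failTasks e1, x ∈ L := fun x hx => hsub x (sub_cho_f _ _ _ hx)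
        simp only [tasksOf, heads, List.mem_append, List.mem_cons, List.mem_singleton,
          List.not_mem_nil, or_false] at ht
        rcases ht with (((rfl|rfl|rfl)|ht)|ht)|ht
        · simp [pstep] at ht'
          rcases ht' with rfl|rfl|rfl
          · exact hp _ (head_mem_tasksOf _ _ _)
          · exact hq _ (head_mem_tasksOf _ _ _)
          · exact hf _ (fl_mem_failTasks _)
        · simp [pstep] at ht'
          rcases ht' with rfl|rfl|rfl
          · exact hp _ (head_mem_tasksOf _ _ _)
          · exact hq _ (head_mem_tasksOf _ _ _)
          · exact hf _ (fl_mem_failTasks _)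
        · simp [pstep] at ht'
          rcases ht' with rfl|rfl|rfl
          · exact hp _ (head_mem_tasksOf _ _ _)
          · exact hq _ (head_mem_tasksOf _ _ _)
          · exact hf _ (fl_mem_failTasks _)
        · exact (ih1 hb1).1 hp t ht t' ht'
        · exact (ih2 hb2).1 hq t ht t' ht'
        · exact (ih1 hb1).2 hf t ht t' ht'
      · intro hsub t ht t' ht'
        have hfp : ∀ x ∈ failTasks e1, x ∈ L := fun x hx => hsub x (fsub_cho_p _ _ hx)
        have hfq : ∀ x ∈ failTasks e2, x ∈ L := fun x hx => hsub x (fsub_cho_q _ _ hx)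
        simp only [failTasks, List.mem_cons, List.mem_append] at ht
        rcases ht with rfl|ht|ht
        · simp [pstep] at ht'
          rcases ht' with rfl|rfl
          · exact hfp _ (fl_mem_failTasks _)
          · exact hfq _ (fl_mem_failTasks _)
        · exact (ih1 hb1).2 hfp t ht t' ht'
        · exact (ih2 hb2).2 hfq t ht t' ht'
  | notseq hl1 hl2 ih1 ih2 =>
      rename_i e1 e2
      intro hb
      obtain ⟨hb1, hb2⟩ : NTBound n e1 ∧ NTBound n e2 := hb
      constructor
      · intro hsub t ht t' ht'
        have hq : ∀ x ∈ tasksOf e2 .tt, x ∈ L := fun x hx => hsub x (sub_seq_q _ _ _ hx)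
        have hkm : ∀ m2 : PMode, (PTask.cn m2 e2 .tt) ∈ L :=
          fun m2 => hq _ (head_mem_tasksOf m2 _ _)
        have hpm : ∀ m2 : PMode, ∀ x ∈ tasksOf (PExp.npred e1) (.cn m2 e2 .tt), x ∈ L :=
          fun m2 x hx => hsub x (sub_seq_p _ _ _ m2 hx)
        have hf1 : ∀ x ∈ failTasks e1, x ∈ L :=
          fun x hx => hpm .many x (sub_npred_f e1 _ hx)
        simp only [tasksOf, mem_heads, List.mem_append, List.mem_cons, List.not_mem_nil,
          or_false] at ht
        rcases ht with ((((rfl|rfl|rfl)|ht)|hbk)|hbk)|hbk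
        · simp [pstep] at ht'
          rcases ht' with rfl|rfl|rfl|rfl|rfl|rfl|rfl|rfl|rfl <;>
            exact hsub _ (sub_seq_p _ _ _ _ (head_mem_tasksOf _ _ _))
        · simp [pstep] at ht'
          rcases ht' with rfl|rfl|rfl|rfl|rfl|rfl|rfl|rfl|rfl <;>
            exact hsub _ (sub_seq_p _ _ _ _ (head_mem_tasksOf _ _ _))
        · simp [pstep] at ht'
          rcases ht' with rfl|rfl|rfl|rfl|rfl|rfl|rfl|rfl|rfl <;>
            exact hsub _ (sub_seq_p _ _ _ _ (head_mem_tasksOf _ _ _))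
        · exact (ih2 hb2).1 hq t ht t' ht'
        all_goals {
          rcases hbk with (rfl|rfl|rfl)|ht
          · simp [pstep] at ht'
            rcases ht' with rfl|rfl
            · exact hf1 _ (fl_mem_failTasks _)
            · exact hkm _
          · simp [pstep] at ht'
            rcases ht' with rfl|rfl
            · exact hf1 _ (fl_mem_failTasks _)
            · exact hkm _
          · simp [pstep] at ht'
            rcases ht' with rfl|rfl
            · exact hf1 _ (fl_mem_failTasks _)
            · exact hkm _
          · exact (ih1 hb1).2 hf1 t ht t' ht' }
      · intro hsub t ht t' ht'
        have hfp : ∀ x ∈ failTasks (PExp.npred e1), x ∈ L := fun x hx => hsub x (fsub_seq_p _ _ hx)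
        have hfq : ∀ x ∈ failTasks e2, x ∈ L := fun x hx => hsub x (fsub_seq_q _ _ hx)
        have htp : ∀ x ∈ tasksOf (PExp.npred e1) (.fl e2), x ∈ L :=
          fun x hx => hsub x (fsub_seq_t _ _ hx)
        have ht1 : ∀ x ∈ tasksOf e1 .tt, x ∈ L := fun x hx => hfp x (fsub_npred e1 hx)
        have hf1 : ∀ x ∈ failTasks e1, x ∈ L := fun x hx => htp x (sub_npred_f e1 _ hx)
        simp only [failTasks, tasksOf, mem_heads, List.mem_cons, List.mem_append,
          List.not_mem_nil, or_false] at ht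
        rcases ht with rfl|(((rfl|ht)|ht)|((rfl|rfl|rfl)|ht))
        · simp [pstep] at ht'
          rcases ht' with rfl|rfl
          · exact hfp _ (fl_mem_failTasks _)
          · exact htp _ (head_mem_tasksOf _ _ _)
        · simp [pstep] at ht'
          subst ht'
          exact ht1 _ (head_mem_tasksOf _ _ _)
        · exact (ih1 hb1).1 ht1 t ht t' ht'
        · exact (ih2 hb2).2 hfq t ht t' ht'
        · simp [pstep] at ht'
          rcases ht' with rfl|rfl
          · exact hf1 _ (fl_mem_failTasks _)
          · exact hfq _ (fl_mem_failTasks _)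
        · simp [pstep] at ht'
          rcases ht' with rfl|rfl
          · exact hf1 _ (fl_mem_failTasks _)
          · exact hfq _ (fl_mem_failTasks _)
        · simp [pstep] at ht'
          rcases ht' with rfl|rfl
          · exact hf1 _ (fl_mem_failTasks _)
          · exact hfq _ (fl_mem_failTasks _)
        · exact (ih1 hb1).2 hf1 t ht t' ht'

end Aux7
section Aux8

theorem tt_mem_CLo (G : PEGG α) : PTask.tt ∈ CLo G := by simp [CLo]

theorem start_tasks_sub_CLo (G : PEGG α) : tasksOf G.start .tt ⊆ CLo G := by
  intro x hx; simp [CLo]; tauto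

theorem start_fail_sub_CLo (G : PEGG α) : failTasks G.start ⊆ CLo G := by
  intro x hx; simp [CLo]; tauto

theorem nt_tasks_sub_CLo (G : PEGG α) {A : ℕ} (hA : A < G.n) :
    tasksOf (G.P A) .tt ⊆ CLo G := by
  intro x hx; simp [CLo]; right; right; right; exact ⟨A, hA, Or.inl hx⟩


theorem nt_fail_sub_CLo (G : PEGG α) {A : ℕ} (hA : A < G.n) :
    failTasks (G.P A) ⊆ CLo G := by
  intro x hx; simp [CLo]; right; right; right; exact ⟨A, hA, Or.inr hx⟩

theorem CLo_closed (G : PEGG α) (hG : G.IsLPEG) :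
    ∀ t ∈ CLo G, ∀ t' ∈ pstep G.P t, t' ∈ CLo G := by
  obtain ⟨hls, hbs, hprod⟩ := hG
  have hP : ∀ A < G.n, (∀ m : PMode, PTask.cn m (G.P A) PTask.tt ∈ CLo G) ∧
      PTask.fl (G.P A) ∈ CLo G := fun A hA =>
    ⟨fun m => nt_tasks_sub_CLo G hA (head_mem_tasksOf m _ _),
     nt_fail_sub_CLo G hA (fl_mem_failTasks _)⟩
  intro t ht
  have ht0 := ht
  simp only [CLo, List.mem_cons, List.mem_append, List.mem_flatMap, List.mem_range] at ht
  rcases ht with rfl|(ht|ht)|⟨A, hA, ht|ht⟩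
  · intro t' ht'; simp [pstep] at ht'
  · exact (linear_closed (CLo G) (tt_mem_CLo G) G.n hP G.start hls hbs).1
      (fun x hx => start_tasks_sub_CLo G hx) t ht
  · exact (linear_closed (CLo G) (tt_mem_CLo G) G.n hP G.start hls hbs).2
      (fun x hx => start_fail_sub_CLo G hx) t ht
  · exact (linear_closed (CLo G) (tt_mem_CLo G) G.n hP (G.P A) (hprod A hA).1 (hprod A hA).2).1
      (fun x hx => nt_tasks_sub_CLo G hA hx) t ht
  · exact (linear_closed (CLo G) (tt_mem_CLo G) G.n hP (G.P A) (hprod A hA).1 (hprod A hA).2).2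
      (fun x hx => nt_fail_sub_CLo G hA hx) t ht

end Aux8
section Aux9
variable {P : ℕ → PExp α}

theorem R_seq_fail1 {p q : PExp α} {w : List α} (h : TS P (.fl p) w) :
    TS P (.fl (.seq p q)) w := by
  obtain ⟨n, j, hj, hc⟩ := h
  exact ⟨j+1, j+1, le_rfl, .seq_fail1 hc⟩

theorem R_seq_fail2 {p q : PExp α} {w : List α} (h : TS P (.cn .many p (.fl q)) w) :
    TS P (.fl (.seq p q)) w := by
  obtain ⟨n, u, v, j, l, rfl, _, hc, _, ⟨j2, _, hc2⟩⟩ := h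
  exact ⟨j+j2+1, j+j2+1, le_rfl, .seq_fail2 hc hc2⟩

theorem R_cho_fail {p q : PExp α} {w : List α} (h1 : TS P (.fl p) w) (h2 : TS P (.fl q) w) :
    TS P (.fl (.cho p q)) w := by
  obtain ⟨n, j, _, hc⟩ := h1
  obtain ⟨n2, j2, _, hc2⟩ := h2
  exact ⟨j+j2+1, j+j2+1, le_rfl, .cho2 hc hc2⟩

theorem R_npred_fail {q : PExp α} {w : List α} (h : TS P (.cn .many q .tt) w) :
    TS P (.fl (.npred q)) w := by
  obtain ⟨n, u, v, j, l, rfl, _, hc, _, _⟩ := h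
  exact ⟨j+1, j+1, le_rfl, .not_fail hc⟩

theorem R_apred_fail {q : PExp α} {w : List α} (h : TS P (.fl q) w) :
    TS P (.fl (.apred q)) w := by
  obtain ⟨n, j, _, hc⟩ := h
  exact ⟨j+1, j+1, le_rfl, .and_fail hc⟩

theorem R_plus_fail {q : PExp α} {w : List α} (h : TS P (.fl q) w) :
    TS P (.fl (.plus q)) w := by
  obtain ⟨n, j, _, hc⟩ := h
  exact ⟨j+1, j+1, le_rfl, .plus_fail hc⟩

theorem R_nt_fail {A : ℕ} {w : List α} (h : TS P (.fl (P A)) w) :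
    TS P (.fl (.nt A)) w := by
  obtain ⟨n, j, _, hc⟩ := h
  exact ⟨j+1, j+1, le_rfl, .nt hc⟩

theorem R_eps {m : PMode} {k : PTask α} {w : List α} (hm : mOK m ([] : List α))
    (h : TS P k w) : TS P (.cn m .eps k) w := by
  obtain ⟨n, hk⟩ := h
  exact ⟨1+n, [], w, 1, n, rfl, le_rfl, .eps w, hm, hk⟩

theorem R_chr {m : PMode} {k : PTask α} {a : α} {w : List α} (hm : mOK m [a])
    (h : TS P k w) : TS P (.cn m (.chr a) k) (a :: w) := by
  obtain ⟨n, hk⟩ := h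
  exact ⟨1+n, [a], w, 1, n, rfl, le_rfl, .chr_ok a w, hm, hk⟩

theorem R_anyc {m : PMode} {k : PTask α} {a : α} {w : List α} (hm : mOK m [a])
    (h : TS P k w) : TS P (.cn m .anyc k) (a :: w) := by
  obtain ⟨n, hk⟩ := h
  exact ⟨1+n, [a], w, 1, n, rfl, le_rfl, .any_ok a w, hm, hk⟩

theorem R_seq {m m1 m2 : PMode} {p q : PExp α} {k : PTask α} {w : List α}
    (hrec : ∀ x y : List α, mOK m1 x → mOK m2 y → mOK m (x ++ y))
    (h : TS P (.cn m1 p (.cn m2 q k)) w) : TS P (.cn m (.seq p q) k) w := by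
  obtain ⟨n, u1, v1, j1, l1, rfl, _, hc1, hm1, u2, v2, j2, l2, rfl, _, hc2, hm2, hk⟩ := h
  exact ⟨j1+j2+1+l2, u1++u2, v2, j1+j2+1, l2, by rw [List.append_assoc], le_rfl,
    .seq_ok hc1 hc2, hrec _ _ hm1 hm2, hk⟩

theorem R_cho1 {m : PMode} {p q : PExp α} {k : PTask α} {w : List α}
    (h : TS P (.cn m p k) w) : TS P (.cn m (.cho p q) k) w := by
  obtain ⟨n, u, v, j, l, rfl, _, hc, hm, hk⟩ := h
  exact ⟨j+1+l, u, v, j+1, l, rfl, le_rfl, .cho1 hc, hm, hk⟩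

theorem R_cho2 {m : PMode} {p q : PExp α} {k : PTask α} {w : List α}
    (h1 : TS P (.fl p) w) (h : TS P (.cn m q k) w) : TS P (.cn m (.cho p q) k) w := by
  obtain ⟨n1, j1, _, hc1⟩ := h1
  obtain ⟨n, u, v, j, l, rfl, _, hc, hm, hk⟩ := h
  exact ⟨j1+j+1+l, u, v, j1+j+1, l, rfl, le_rfl, .cho2 hc1 hc, hm, hk⟩

theorem R_star_done {m : PMode} {p : PExp α} {k : PTask α} {w : List α}
    (hm : mOK m ([] : List α)) (h1 : TS P (.fl p) w) (h : TS P k w) :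
    TS P (.cn m (.star p) k) w := by
  obtain ⟨n1, j1, _, hc1⟩ := h1
  obtain ⟨n, hk⟩ := h
  exact ⟨j1+1+n, [], w, j1+1, n, rfl, le_rfl, .star_done hc1, hm, hk⟩

theorem R_star_step {m : PMode} {p : PExp α} {k : PTask α} {w : List α}
    (hrec : ∀ x y : List α, x ≠ [] → mOK m (x ++ y))
    (h : TS P (.cn .mpos p (.cn .many (.star p) k)) w) : TS P (.cn m (.star p) k) w := by
  obtain ⟨n, u1, v1, j1, l1, rfl, _, hc1, hm1, u2, v2, j2, l2, rfl, _, hc2, hm2, hk⟩ := h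
  exact ⟨j1+j2+1+l2, u1++u2, v2, j1+j2+1, l2, by rw [List.append_assoc], le_rfl,
    .star_step hc1 hc2, hrec _ _ hm1, hk⟩

theorem R_npred {m : PMode} {q : PExp α} {k : PTask α} {w : List α}
    (hm : mOK m ([] : List α)) (h1 : TS P (.fl q) w) (h : TS P k w) :
    TS P (.cn m (.npred q) k) w := by
  obtain ⟨n1, j1, _, hc1⟩ := h1
  obtain ⟨n, hk⟩ := h
  exact ⟨j1+1+n, [], w, j1+1, n, rfl, le_rfl, .not_ok hc1, hm, hk⟩

theorem R_opt_ok {m : PMode} {q : PExp α} {k : PTask α} {w : List α}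
    (h : TS P (.cn m q k) w) : TS P (.cn m (.opt q) k) w := by
  obtain ⟨n, u, v, j, l, rfl, _, hc, hm, hk⟩ := h
  exact ⟨j+1+l, u, v, j+1, l, rfl, le_rfl, .opt_ok hc, hm, hk⟩

theorem R_opt_eps {m : PMode} {q : PExp α} {k : PTask α} {w : List α}
    (hm : mOK m ([] : List α)) (h1 : TS P (.fl q) w) (h : TS P k w) :
    TS P (.cn m (.opt q) k) w := by
  obtain ⟨n1, j1, _, hc1⟩ := h1
  obtain ⟨n, hk⟩ := h
  exact ⟨j1+1+n, [], w, j1+1, n, rfl, le_rfl, .opt_eps hc1, hm, hk⟩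

theorem R_apred {m : PMode} {q : PExp α} {k : PTask α} {w : List α}
    (hm : mOK m ([] : List α)) (h1 : TS P (.cn .many q .tt) w) (h : TS P k w) :
    TS P (.cn m (.apred q) k) w := by
  obtain ⟨n1, u, v, j1, l1, rfl, _, hc1, _, _⟩ := h1
  obtain ⟨n, hk⟩ := h
  exact ⟨j1+1+n, [], u ++ v, j1+1, n, rfl, le_rfl, .and_ok hc1, hm, hk⟩

theorem R_plus {m : PMode} {q : PExp α} {k : PTask α} {w : List α}
    (hrec : ∀ x y : List α, x ≠ [] → mOK m (x ++ y))
    (h : TS P (.cn .mpos q (.cn .many (.star q) k)) w) : TS P (.cn m (.plus q) k) w := by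
  obtain ⟨n, u1, v1, j1, l1, rfl, _, hc1, hm1, u2, v2, j2, l2, rfl, _, hc2, hm2, hk⟩ := h
  exact ⟨j1+j2+1+l2, u1++u2, v2, j1+j2+1, l2, by rw [List.append_assoc], le_rfl,
    .plus_ok hc1 hc2, hrec _ _ hm1, hk⟩

theorem R_nt {m : PMode} {A : ℕ} {k : PTask α} {w : List α}
    (h : TS P (.cn m (P A) k) w) : TS P (.cn m (.nt A) k) w := by
  obtain ⟨n, u, v, j, l, rfl, _, hc, hm, hk⟩ := h
  exact ⟨j+1+l, u, v, j+1, l, rfl, le_rfl, .nt hc, hm, hk⟩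

end Aux9
section Aux10

theorem mode_split {m : PMode} {x y : List α} (hm : mOK m (x ++ y)) :
    ∃ m1 m2 : PMode, mOK m1 x ∧ mOK m2 y ∧
      ∀ x' y' : List α, mOK m1 x' → mOK m2 y' → mOK m (x' ++ y') := by
  cases m with
  | many => exact ⟨.many, .many, trivial, trivial, fun _ _ _ _ => trivial⟩
  | mpos =>
      cases x with
      | nil =>
          refine ⟨.meps, .mpos, rfl, by simpa using hm, fun x' y' hx' hy' => ?_⟩
          have hx'' : x' = [] := hx'
          subst hx''
          simpa using hy'
      | cons b x =>
          refine ⟨.mpos, .many, by simp [mOK], trivial, fun x' y' hx' _ => ?_⟩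
          have : x' ≠ [] := hx'
          show x' ++ y' ≠ []
          intro hc
          exact this (List.append_eq_nil_iff.mp hc).1
  | meps =>
      have h := List.append_eq_nil_iff.mp hm
      refine ⟨.meps, .meps, h.1, h.2, fun x' y' hx' hy' => ?_⟩
      have hx'' : x' = [] := hx'
      have hy'' : y' = [] := hy'
      subst hx''; subst hy''; rfl

theorem mode_pos {m : PMode} {x0 y0 : List α} (hx0 : x0 ≠ []) (hm : mOK m (x0 ++ y0)) :
    ∀ x y : List α, x ≠ [] → mOK m (x ++ y) := by
  intro x y hx
  cases m with
  | many => trivial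
  | mpos =>
      show x ++ y ≠ []
      intro hc
      exact hx (List.append_eq_nil_iff.mp hc).1
  | meps =>
      have : x0 ++ y0 = [] := hm
      exact absurd (List.append_eq_nil_iff.mp this).1 hx0

theorem ts_congr (G : PEGG α) (hG : G.IsLPEG) :
    ∀ N (t : PTask α), t ∈ CLo G → ∀ (a : α) (w w' : List α),
      (∀ s ∈ CLo G, TS G.P s w ↔ TS G.P s w') →
      TSn G.P t N (a :: w) → TS G.P t (a :: w') := by
  intro N
  induction N using Nat.strong_induction_on with
  | _ N IH =>
    intro t ht a w w' hww h
    have hstp := CLo_closed G hG t ht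
    cases t with
    | tt => exact ⟨0, trivial⟩
    | fl e =>
      obtain ⟨j, hj, hc⟩ := h
      cases e with
      | eps => cases hc
      | chr b =>
          cases hc with
          | chr_fail _ hne => exact ⟨1, 1, le_rfl, .chr_fail w' hne⟩
      | anyc => cases hc
      | seq p q =>
          generalize hgen : a :: w = W at hc
          cases hc with
          | seq_fail1 hc1 =>
              subst hgen
              rename_i n1
              have h1 : TS G.P (.fl p) (a :: w') :=
                IH n1 (by omega) _ (hstp _ (by simp [pstep])) a w w' hww ⟨n1, le_rfl, hc1⟩
              exact R_seq_fail1 h1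
          | seq_fail2 hc1 hc2 =>
              rename_i n1 n2 x w2
              have hts : TSn G.P (.cn .many p (.fl q)) (n1 + n2) (a :: w) :=
                ⟨x, w2, n1, n2, hgen, le_rfl, (by rw [hgen]; exact hc1), trivial, ⟨n2, le_rfl, hc2⟩⟩
              have h1 := IH (n1 + n2) (by omega) _ (hstp _ (by simp [pstep])) a w w' hww hts
              exact R_seq_fail2 h1
      | cho p q =>
          cases hc with
          | cho2 hc1 hc2 =>
              rename_i n1 n2
              have h1 : TS G.P (.fl p) (a :: w') :=
                IH n1 (by omega) _ (hstp _ (by simp [pstep])) a w w' hww ⟨n1, le_rfl, hc1⟩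
              have h2 : TS G.P (.fl q) (a :: w') :=
                IH n2 (by omega) _ (hstp _ (by simp [pstep])) a w w' hww ⟨n2, le_rfl, hc2⟩
              exact R_cho_fail h1 h2
      | star p =>
          generalize hgen : a :: w = W at hc
          cases hc
      | npred q =>
          cases hc with
          | not_fail hc1 =>
              rename_i n1 x
              obtain ⟨v0, hv0⟩ := consume_prefix (consume_of_cs hc1) x rfl
              have hts : TSn G.P (.cn .many q .tt) n1 (a :: w) :=
                ⟨x, v0, n1, 0, hv0, by omega, hc1, trivial, trivial⟩
              have h1 := IH n1 (by omega) _ (hstp _ (by simp [pstep])) a w w' hww hts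
              exact R_npred_fail h1
      | opt q => cases hc
      | apred q =>
          cases hc with
          | and_fail hc1 =>
              rename_i n1
              have h1 : TS G.P (.fl q) (a :: w') :=
                IH n1 (by omega) _ (hstp _ (by simp [pstep])) a w w' hww ⟨n1, le_rfl, hc1⟩
              exact R_apred_fail h1
      | plus q =>
          generalize hgen : a :: w = W at hc
          cases hc with
          | plus_fail hc1 =>
              subst hgen
              rename_i n1
              have h1 : TS G.P (.fl q) (a :: w') :=
                IH n1 (by omega) _ (hstp _ (by simp [pstep])) a w w' hww ⟨n1, le_rfl, hc1⟩
              exact R_plus_fail h1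
      | nt A =>
          cases hc with
          | nt hc1 =>
              rename_i n1
              have h1 : TS G.P (.fl (G.P A)) (a :: w') :=
                IH n1 (by omega) _ (hstp _ (by simp [pstep])) a w w' hww ⟨n1, le_rfl, hc1⟩
              exact R_nt_fail h1
    | cn m e k =>
      obtain ⟨u, v, j, l, heq, hjl, hc, hm, hk⟩ := h
      cases e with
      | eps =>
          cases hc
          have hv : v = a :: w := by simpa using heq.symm
          subst hv
          have h1 : TS G.P k (a :: w') :=
            IH l (by omega) _ (hstp _ (by simp [pstep])) a w w' hww hk
          exact R_eps hm h1
      | chr b =>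
          cases hc
          have hv : v = w := by simpa using heq.symm
          subst hv
          have hkL : k ∈ CLo G := hstp _ (by simp [pstep])
          have h1 : TS G.P k w' := (hww k hkL).mp ⟨l, hk⟩
          exact R_chr hm h1
      | anyc =>
          cases hc
          have hv : v = w := by simpa using heq.symm
          subst hv
          have hkL : k ∈ CLo G := hstp _ (by simp [pstep])
          have h1 : TS G.P k w' := (hww k hkL).mp ⟨l, hk⟩
          exact R_anyc hm h1
      | seq p q =>
          generalize hgen : a :: w = W at hc
          cases hc with
          | seq_ok hc1 hc2 =>
              rename_i n1 n2 x y w2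
              have hw2 : w2 = y ++ v :=
                List.append_cancel_left (by rw [← hgen, heq, List.append_assoc])
              obtain ⟨m1, m2, hm1, hm2, hrec⟩ := mode_split (m := m) (x := x) (y := y) hm
              have hts : TSn G.P (.cn m1 p (.cn m2 q k)) (n1 + (n2 + l)) (a :: w) :=
                ⟨x, w2, n1, n2 + l, hgen, le_rfl, (by rw [hgen]; exact hc1), hm1,
                  ⟨y, v, n2, l, hw2, le_rfl, hc2, hm2, hk⟩⟩
              have h1 := IH (n1 + (n2 + l)) (by omega) _
                (hstp _ (by cases m1 <;> cases m2 <;> simp [pstep])) a w w' hww hts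
              exact R_seq hrec h1
      | cho p q =>
          cases hc with
          | cho1 hc1 =>
              rename_i n1
              have hts : TSn G.P (.cn m p k) (n1 + l) (a :: w) :=
                ⟨u, v, n1, l, heq, le_rfl, hc1, hm, hk⟩
              have h1 := IH (n1 + l) (by omega) _ (hstp _ (by simp [pstep])) a w w' hww hts
              exact R_cho1 h1
          | cho2 hc1 hc2 =>
              rename_i n1 n2
              have h1 : TS G.P (.fl p) (a :: w') :=
                IH n1 (by omega) _ (hstp _ (by simp [pstep])) a w w' hww ⟨n1, le_rfl, hc1⟩
              have hts : TSn G.P (.cn m q k) (n2 + l) (a :: w) :=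
                ⟨u, v, n2, l, heq, le_rfl, hc2, hm, hk⟩
              have h2 := IH (n2 + l) (by omega) _ (hstp _ (by simp [pstep])) a w w' hww hts
              exact R_cho2 h1 h2
      | star p =>
          rcases cs_star_some j p (a :: w) u hc with ⟨j1, hj1, hf, rfl⟩ |
            ⟨x, y, v1, j1, j2, hx, hw1, hu, hc1, hc2, hlt⟩
          · have hv : v = a :: w := by simpa using heq.symm
            subst hv
            have h1 : TS G.P (.fl p) (a :: w') :=
              IH j1 (by omega) _ (hstp _ (by simp [pstep])) a w w' hww ⟨j1, le_rfl, hf⟩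
            have h2 : TS G.P k (a :: w') :=
              IH l (by omega) _ (hstp _ (by simp [pstep])) a w w' hww hk
            exact R_star_done hm h1 h2
          · have hv1 : v1 = y ++ v :=
              List.append_cancel_left (by rw [← hw1, heq, hu, List.append_assoc])
            have hts : TSn G.P (.cn .mpos p (.cn .many (.star p) k)) (j1 + (j2 + l)) (a :: w) :=
              ⟨x, v1, j1, j2 + l, hw1, le_rfl, hc1, hx,
                ⟨y, v, j2, l, hv1, le_rfl, hc2, trivial, hk⟩⟩
            have h1 := IH (j1 + (j2 + l)) (by omega) _ (hstp _ (by simp [pstep])) a w w' hww hts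
            exact R_star_step (mode_pos hx (hu ▸ hm)) h1
      | npred q =>
          cases hc with
          | not_ok hc1 =>
              rename_i n1
              have h1 : TS G.P (.fl q) (a :: w') :=
                IH n1 (by omega) _ (hstp _ (by simp [pstep])) a w w' hww ⟨n1, le_rfl, hc1⟩
              have hv : v = a :: w := by simpa using heq.symm
              subst hv
              have h2 : TS G.P k (a :: w') :=
                IH l (by omega) _ (hstp _ (by simp [pstep])) a w w' hww hk
              exact R_npred hm h1 h2
      | opt q =>
          cases hc with
          | opt_ok hc1 =>
              rename_i n1
              have hts : TSn G.P (.cn m q k) (n1 + l) (a :: w) :=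
                ⟨u, v, n1, l, heq, le_rfl, hc1, hm, hk⟩
              have h1 := IH (n1 + l) (by omega) _ (hstp _ (by simp [pstep])) a w w' hww hts
              exact R_opt_ok h1
          | opt_eps hc1 =>
              rename_i n1
              have h1 : TS G.P (.fl q) (a :: w') :=
                IH n1 (by omega) _ (hstp _ (by simp [pstep])) a w w' hww ⟨n1, le_rfl, hc1⟩
              have hv : v = a :: w := by simpa using heq.symm
              subst hv
              have h2 : TS G.P k (a :: w') :=
                IH l (by omega) _ (hstp _ (by simp [pstep])) a w w' hww hk
              exact R_opt_eps hm h1 h2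
      | apred q =>
          cases hc with
          | and_ok hc1 =>
              rename_i n1 x
              obtain ⟨v0, hv0⟩ := consume_prefix (consume_of_cs hc1) x rfl
              have hts : TSn G.P (.cn .many q .tt) n1 (a :: w) :=
                ⟨x, v0, n1, 0, hv0, by omega, hc1, trivial, trivial⟩
              have h1 := IH n1 (by omega) _ (hstp _ (by simp [pstep])) a w w' hww hts
              have hv : v = a :: w := by simpa using heq.symm
              subst hv
              have h2 : TS G.P k (a :: w') :=
                IH l (by omega) _ (hstp _ (by simp [pstep])) a w w' hww hk
              exact R_apred hm h1 h2
      | plus q =>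
          generalize hgen : a :: w = W at hc
          cases hc with
          | plus_ok hc1 hc2 =>
              rename_i n1 n2 x y w2
              have hx : x ≠ [] := by
                intro hxe
                subst hxe
                simp only [List.nil_append] at hgen hc1 hc2
                rcases cs_star_some n2 q w2 y hc2 with ⟨j1', _, hf, _⟩ |
                  ⟨x', y', v', j1', j2', hx', _, _, hc1', _, _⟩
                · have := consume_det (consume_of_cs hc1) (consume_of_cs hf)
                  simp at this
                · have := consume_det (consume_of_cs hc1) (consume_of_cs hc1')
                  simp only [Option.some.injEq] at this
                  exact hx' this.symm
              have hw2 : w2 = y ++ v :=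
                List.append_cancel_left (by rw [← hgen, heq, List.append_assoc])
              have hts : TSn G.P (.cn .mpos q (.cn .many (.star q) k)) (n1 + (n2 + l)) (a :: w) :=
                ⟨x, w2, n1, n2 + l, hgen, le_rfl, (by rw [hgen]; exact hc1), hx,
                  ⟨y, v, n2, l, hw2, le_rfl, hc2, trivial, hk⟩⟩
              have h1 := IH (n1 + (n2 + l)) (by omega) _ (hstp _ (by simp [pstep])) a w w' hww hts
              exact R_plus (mode_pos hx hm) h1
      | nt A =>
          cases hc with
          | nt hc1 =>
              rename_i n1
              have hts : TSn G.P (.cn m (G.P A) k) (n1 + l) (a :: w) :=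
                ⟨u, v, n1, l, heq, le_rfl, hc1, hm, hk⟩
              have h1 := IH (n1 + l) (by omega) _ (hstp _ (by simp [pstep])) a w w' hww hts
              exact R_nt h1

end Aux10
section Aux11

theorem TS_start_iff (G : PEGG α) (w : List α) :
    TS G.P (.cn .many G.start .tt) w ↔ w ∈ G.Lang := by
  constructor
  · rintro ⟨n, u, v, j, l, heq, _, hc, -, -⟩
    exact ⟨u, consume_of_cs hc⟩
  · rintro ⟨y, hy⟩
    obtain ⟨j, hc⟩ := cs_of_consume hy
    obtain ⟨v, hv⟩ := consume_prefix hy y rfl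
    exact ⟨j, y, v, j, 0, hv, by omega, hc, trivial, trivial⟩

theorem start_task_mem (G : PEGG α) : PTask.cn .many G.start .tt ∈ CLo G :=
  start_tasks_sub_CLo G (head_mem_tasksOf _ _ _)

end Aux11
/-- for every LPEG there is a DFA recognizing the same language. -/
theorem lpeg_to_dfa [Fintype α] (G : LPEG α) :
    ∃ (σ : Type) (_ : Fintype σ) (D : DFA α σ), G.Lang = D.accepts := by
  classical
  set G0 := G.toPEGG with hG0
  have hLP : G0.IsLPEG := G.isLPEG
  let T : Type := {t : PTask α // t ∈ CLo G0}
  haveI : Fintype T := Fintype.subtype (CLo G0).toFinset (by simp)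
  let σ : Type := (T → Bool) → Bool
  haveI hfin : Fintype σ := by infer_instance
  let sv : List α → (T → Bool) := fun w q => decide (TS G0.P q.1 w)
  let δ : T → α → (T → Bool) → Bool := fun q a v =>
    decide (∃ w, (∀ s : T, TS G0.P s.1 w ↔ v s = true) ∧ TS G0.P q.1 (a :: w))
  have hδ : ∀ (q : T) (a : α) (w : List α), δ q a (sv w) = sv (a :: w) q := by
    intro q a w
    show decide _ = decide _
    rw [decide_eq_decide]
    constructor
    · rintro ⟨w0, hst, hT⟩
      have hww : ∀ s ∈ CLo G0, TS G0.P s w0 ↔ TS G0.P s w := by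
        intro s hs
        rw [hst ⟨s, hs⟩]
        simp only [sv, decide_eq_true_iff]
      obtain ⟨N, hN⟩ := hT
      exact ts_congr G0 hLP N q.1 q.2 a w0 w hww hN
    · intro hT
      refine ⟨w, fun s => ?_, hT⟩
      simp only [sv, decide_eq_true_iff]
  let D : DFA α σ :=
    { step := fun f a => fun v => f (fun q => δ q a v)
      start := fun v => v ⟨.cn .many G0.start .tt, start_task_mem G0⟩
      accept := {f | f (sv []) = true} }
  refine ⟨σ, hfin, D, ?_⟩
  have key : ∀ (u : List α) (s : σ) (K : List α → Prop),
      (∀ w, (s (sv w) = true ↔ K w)) →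
      ∀ w, (DFA.evalFrom D s u (sv w) = true ↔ K (u ++ w)) := by
    intro u
    induction u with
    | nil => intro s K hs w; simpa using hs w
    | cons a u ih =>
        intro s K hs w
        have hstep : ∀ w, (D.step s a) (sv w) = true ↔ K (a :: w) := by
          intro w
          have : (D.step s a) (sv w) = s (sv (a :: w)) := by
            show s (fun q => δ q a (sv w)) = s (sv (a :: w))
            congr 1
            funext q
            exact hδ q a w
          rw [this]
          exact hs (a :: w)
        have := ih (D.step s a) (fun w => K (a :: w)) hstep w
        simpa using this
  have hstart : ∀ w, (D.start (sv w) = true ↔ TS G0.P (.cn .many G0.start .tt) w) := by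
    intro w
    show (decide _ = true ↔ _)
    simp only [decide_eq_true_iff]
  ext w
  have h1 := key w D.start (fun w => TS G0.P (.cn .many G0.start .tt) w) hstart []
  simp only [List.append_nil] at h1
  have : w ∈ D.accepts ↔ DFA.evalFrom D D.start w (sv []) = true := Iff.rfl
  rw [LPEG.Lang]
  refine Iff.trans ?_ this.symm
  rw [h1, TS_start_iff]
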